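/- Along any trajectory of the closed-loop SRB system, the storage function V = (1/2) vᵀ M_d v + (1/2) k_p ‖p_e‖² + 2 k_o (1 − η_e) satisfies V̇(t) ≤ − v(t)ᵀ D_d v(t) + v(t)ᵀ F_h(t) for all t; that is, the robot generalized velocity v and the human force F_h form a strictly passive pair (Theorem 1, statement 1). -/

import Mathlib

open Matrix

/-!
Differentiating the storage function along a trajectory gives
`V̇ = vᵀ M_d v̇ + k_p p_eᵀ ṗ_e − 2 k_o η̇_e`. Substituting the admittance model, `vᵀ M_d v̇` is the
supplied power `vᵀ F_h − vᵀ D_d v` plus the control power `k_p ṗᵀ p_e + k_o ε_eᵀ R_e ω`; the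
god-object dynamics and the quaternion kinematics produce exactly the negatives of these two
coupling terms, so `V̇ = −vᵀ D_d v + vᵀ F_h − k_r f (k_p ‖p_e‖² + k_o ‖ε_e‖²)`, and the last term is
nonpositive.
-/

section Derivatives

variable {ι : Type*} [Fintype ι]

theorem HasDerivAt.dotProduct {x y : ℝ → ι → ℝ} {x' y' : ι → ℝ} {t : ℝ}
    (hx : HasDerivAt x x' t) (hy : HasDerivAt y y' t) :
    HasDerivAt (fun s => x s ⬝ᵥ y s) (x' ⬝ᵥ y t + x t ⬝ᵥ y') t := by
  simp only [_root_.dotProduct, ← Finset.sum_add_distrib]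
  exact HasDerivAt.fun_sum fun i _ => (hasDerivAt_pi.1 hx i).mul (hasDerivAt_pi.1 hy i)

theorem HasDerivAt.dotProduct_self {x : ℝ → ι → ℝ} {x' : ι → ℝ} {t : ℝ}
    (hx : HasDerivAt x x' t) :
    HasDerivAt (fun s => x s ⬝ᵥ x s) (2 * (x t ⬝ᵥ x')) t := by
  convert hx.dotProduct hx using 1
  rw [dotProduct_comm x']
  ring

theorem HasDerivAt.mulVec (A : Matrix ι ι ℝ) {x : ℝ → ι → ℝ} {x' : ι → ℝ} {t : ℝ}
    (hx : HasDerivAt x x' t) :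
    HasDerivAt (fun s => A *ᵥ x s) (A *ᵥ x') t :=
  hasDerivAt_pi.2 fun i => by
    simpa only [Matrix.mulVec, _root_.dotProduct] using
      HasDerivAt.fun_sum fun j _ => (hasDerivAt_pi.1 hx j).const_mul (A i j)

theorem Matrix.IsSymm.dotProduct_mulVec_comm {α : Type*} [CommSemiring α] {A : Matrix ι ι α}
    (hA : A.IsSymm) (x y : ι → α) :
    x ⬝ᵥ A *ᵥ y = y ⬝ᵥ A *ᵥ x := by
  rw [dotProduct_mulVec, ← vecMul_transpose, hA.eq, dotProduct_comm]

theorem HasDerivAt.dotProduct_mulVec_self {A : Matrix ι ι ℝ} (hA : A.IsSymm)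
    {x : ℝ → ι → ℝ} {x' : ι → ℝ} {t : ℝ} (hx : HasDerivAt x x' t) :
    HasDerivAt (fun s => x s ⬝ᵥ A *ᵥ x s) (2 * (x t ⬝ᵥ A *ᵥ x')) t := by
  convert hx.dotProduct (hx.mulVec A) using 1
  rw [hA.dotProduct_mulVec_comm x']
  ring

end Derivatives

theorem Matrix.PosDef.isSymm {ι : Type*} [Fintype ι] {A : Matrix ι ι ℝ} (hA : A.PosDef) :
    A.IsSymm := by
  simpa [Matrix.IsSymm, Matrix.IsHermitian, conjTranspose_eq_transpose_of_trivial]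
    using hA.isHermitian

theorem Fin.append_dotProduct_append {α : Type*} [Mul α] [AddCommMonoid α] {m n : ℕ}
    (a c : Fin m → α) (b d : Fin n → α) :
    Fin.append a b ⬝ᵥ Fin.append c d = a ⬝ᵥ c + b ⬝ᵥ d := by
  simp [dotProduct, Fin.sum_univ_add]

theorem admittance_power_balance {m n k : ℕ} {M D : Matrix (Fin (m + n)) (Fin (m + n)) ℝ}
    {v a F : Fin (m + n) → ℝ} {pdot pe : Fin m → ℝ} {ω : Fin n → ℝ} {ε : Fin k → ℝ}
    {R : Matrix (Fin k) (Fin n) ℝ} {kp ko : ℝ} (hv : v = Fin.append pdot ω)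
    (hadm : M *ᵥ a + D *ᵥ v = F + Fin.append (kp • pe) (ko • Rᵀ *ᵥ ε)) :
    v ⬝ᵥ M *ᵥ a = v ⬝ᵥ F - v ⬝ᵥ D *ᵥ v + kp * (pdot ⬝ᵥ pe) + ko * (ε ⬝ᵥ R *ᵥ ω) := by
  have hcontrol : v ⬝ᵥ Fin.append (kp • pe) (ko • Rᵀ *ᵥ ε) =
      kp * (pdot ⬝ᵥ pe) + ko * (ε ⬝ᵥ R *ᵥ ω) := by
    rw [hv, Fin.append_dotProduct_append, dotProduct_smul, dotProduct_smul, smul_eq_mul,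
      smul_eq_mul, dotProduct_mulVec, vecMul_transpose, dotProduct_comm (R *ᵥ ω)]
  rw [eq_sub_of_add_eq hadm, dotProduct_sub, dotProduct_add, hcontrol]
  ring

theorem storage_function_passivity_general
    (Md Dd : Matrix (Fin 6) (Fin 6) ℝ) (kp ko kr : ℝ) (f : ℝ → ℝ)
    (Fh : ℝ → Fin 6 → ℝ)
    (p pg ω εe pdot : ℝ → Fin 3 → ℝ) (ηe : ℝ → ℝ)
    (Re : ℝ → Matrix (Fin 3) (Fin 3) ℝ)
    (v vdot : ℝ → Fin 6 → ℝ)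
    (hMd : Md.PosDef)
    (hkp : 0 < kp) (hko : 0 < ko) (hkr : 0 < kr)
    (hf : ∀ t : ℝ, f t ∈ Set.Icc (0:ℝ) 1)
    -- `v = (ṗ, ω)`:
    (hp : ∀ t : ℝ, HasDerivAt p (pdot t) t)
    (hv : ∀ t : ℝ, v t = Fin.append (pdot t) (ω t))
    (hvdot : ∀ t : ℝ, HasDerivAt v (vdot t) t)
    -- (i) admittance model with `u_c = (k_p p_e, k_o R_eᵀ ε_e)`:
    (hadm : ∀ t : ℝ,
      Md.mulVec (vdot t) + Dd.mulVec (v t) =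
        Fh t + Fin.append (kp • (pg t - p t)) (ko • (Re t)ᵀ.mulVec (εe t)))
    -- (ii) god-object dynamics:
    (hpg : ∀ t : ℝ, HasDerivAt pg ((-(kr * f t)) • (pg t - p t)) t)
    -- (iii) quaternion-error kinematics, with `ω_g = −k_r f ε_e`:
    (hηe : ∀ t : ℝ, HasDerivAt ηe
      (-(1 / 2) * (εe t ⬝ᵥ ((-(kr * f t)) • εe t - (Re t).mulVec (ω t)))) t) :
    ∀ t : ℝ,
      DifferentiableAt ℝ (fun s : ℝ =>
          (1 / 2) * (v s ⬝ᵥ Md.mulVec (v s)) +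
            (1 / 2) * kp * ((pg s - p s) ⬝ᵥ (pg s - p s)) +
            2 * ko * (1 - ηe s)) t ∧
      deriv (fun s : ℝ =>
          (1 / 2) * (v s ⬝ᵥ Md.mulVec (v s)) +
            (1 / 2) * kp * ((pg s - p s) ⬝ᵥ (pg s - p s)) +
            2 * ko * (1 - ηe s)) t ≤
        -(v t ⬝ᵥ Dd.mulVec (v t)) + v t ⬝ᵥ Fh t := by
  intro t
  have hpe : HasDerivAt (fun s => pg s - p s) ((-(kr * f t)) • (pg t - p t) - pdot t) t :=
    (hpg t).sub (hp t)
  have hV := ((((hvdot t).dotProduct_mulVec_self hMd.isSymm).const_mul (1 / 2)).fun_add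
    (hpe.dotProduct_self.const_mul ((1 / 2) * kp))).fun_add
      (((hηe t).const_sub 1).const_mul (2 * ko))
  refine ⟨hV.differentiableAt, ?_⟩
  rw [hV.deriv, admittance_power_balance (m := 3) (n := 3) (hv t) (hadm t)]
  set pe := pg t - p t
  have hdissipation : 0 ≤ kr * f t * (kp * (pe ⬝ᵥ pe) + ko * (εe t ⬝ᵥ εe t)) :=
    mul_nonneg (mul_nonneg hkr.le (hf t).1) (add_nonneg
      (mul_nonneg hkp.le (dotProduct_star_self_nonneg pe))
      (mul_nonneg hko.le (dotProduct_star_self_nonneg (εe t))))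
  simp only [dotProduct_sub, dotProduct_smul, smul_eq_mul, dotProduct_comm pe (pdot t)]
  linarith

/-- along any trajectory of the closed-loop SRB system,
the storage function
`V = (1/2) vᵀ M_d v + (1/2) k_p ‖p_e‖² + 2 k_o (1 − η_e)` satisfies
`V̇(t) ≤ −v(t)ᵀ D_d v(t) + v(t)ᵀ F_h(t)` for all `t`; i.e. the robot
generalized velocity `v` and the human force `F_h` form a strictly passive
pair (Theorem 1, statement 1).  Squared Euclidean norms are written via dot
products and `v = (ṗ, ω) ∈ ℝ⁶`. -/
theorem storage_function_passivity
    (Md Dd : Matrix (Fin 6) (Fin 6) ℝ) (kp ko kr : ℝ) (f : ℝ → ℝ)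
    (Fh : ℝ → Fin 6 → ℝ)
    (p pg ω εe pdot : ℝ → Fin 3 → ℝ) (ηe : ℝ → ℝ)
    (Re : ℝ → Matrix (Fin 3) (Fin 3) ℝ)
    (v vdot : ℝ → Fin 6 → ℝ)
    (hMd : Md.PosDef) (hDd : Dd.PosDef)
    (hkp : 0 < kp) (hko : 0 < ko) (hkr : 0 < kr)
    (hf : ∀ t : ℝ, f t ∈ Set.Icc (0:ℝ) 1)
    (hRe : ∀ t : ℝ, (Re t)ᵀ * Re t = 1)
    (hRedet : ∀ t : ℝ, (Re t).det = 1)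
    -- `v = (ṗ, ω)`:
    (hp : ∀ t : ℝ, HasDerivAt p (pdot t) t)
    (hv : ∀ t : ℝ, v t = Fin.append (pdot t) (ω t))
    (hvdot : ∀ t : ℝ, HasDerivAt v (vdot t) t)
    -- (i) admittance model with `u_c = (k_p p_e, k_o R_eᵀ ε_e)`:
    (hadm : ∀ t : ℝ,
      Md.mulVec (vdot t) + Dd.mulVec (v t) =
        Fh t + Fin.append (kp • (pg t - p t)) (ko • (Re t)ᵀ.mulVec (εe t)))
    -- (ii) god-object dynamics:
    (hpg : ∀ t : ℝ, HasDerivAt pg ((-(kr * f t)) • (pg t - p t)) t)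
    -- (iii) quaternion-error kinematics, with `ω_g = −k_r f ε_e`:
    (hηe : ∀ t : ℝ, HasDerivAt ηe
      (-(1 / 2) * (εe t ⬝ᵥ ((-(kr * f t)) • εe t - (Re t).mulVec (ω t)))) t) :
    ∀ t : ℝ,
      DifferentiableAt ℝ (fun s : ℝ =>
          (1 / 2) * (v s ⬝ᵥ Md.mulVec (v s)) +
            (1 / 2) * kp * ((pg s - p s) ⬝ᵥ (pg s - p s)) +
            2 * ko * (1 - ηe s)) t ∧
      deriv (fun s : ℝ =>
          (1 / 2) * (v s ⬝ᵥ Md.mulVec (v s)) +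
            (1 / 2) * kp * ((pg s - p s) ⬝ᵥ (pg s - p s)) +
            2 * ko * (1 - ηe s)) t ≤
        -(v t ⬝ᵥ Dd.mulVec (v t)) + v t ⬝ᵥ Fh t :=
  storage_function_passivity_general Md Dd kp ko kr f Fh p pg ω εe pdot ηe Re v vdot hMd hkp hko hkr
    hf hp hv hvdot hadm hpg hηe
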